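/- Suppose the number of positive integers n ≤ N with τ(n) − 2 ≥ x is at least y. Then the expected size of the largest strongly connected component of the randomly oriented divisor graph D_ρ(N) satisfies E[#Φ(D_ρ(N))] ≥ y·(1 − ρ(2ρ − ρ²)^x − (1−ρ)(1−ρ²)^x). -/
import Mathlib


open scoped Classical

noncomputable section

/-- The edge set of the divisor graph `G_N`: pairs `(a, b)` with `1 ≤ a < b ≤ N`
and `a ∣ b`; each undirected edge is recorded once. -/
def divEdges (N : ℕ) : Finset (ℕ × ℕ) :=
  (Finset.Icc 1 N ×ˢ Finset.Icc 1 N).filter (fun p => p.1 < p.2 ∧ p.1 ∣ p.2)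

/-- An orientation of `G_N` is a function on the edge set; `f e = true` means the
edge `e = (a, b)` (with `a < b`) is reversed, i.e. directed from the smaller `a`
to the larger `b` (the default orientation of `D_N` points from larger to smaller). -/
def dAdj (N : ℕ) (f : {e // e ∈ divEdges N} → Bool) (x y : ℕ) : Prop :=
  (∃ h : (y, x) ∈ divEdges N, f ⟨(y, x), h⟩ = false) ∨
  (∃ h : (x, y) ∈ divEdges N, f ⟨(x, y), h⟩ = true)

/-- The size of the strongly connected component of `v` in the orientation `f`. -/
def sccSize (N : ℕ) (f : {e // e ∈ divEdges N} → Bool) (v : ℕ) : ℕ :=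
  ((Finset.Icc 1 N).filter (fun w =>
    Relation.ReflTransGen (dAdj N f) v w ∧ Relation.ReflTransGen (dAdj N f) w v)).card

/-- The size of the largest strongly connected component of the orientation `f`. -/
def largestSCC (N : ℕ) (f : {e // e ∈ divEdges N} → Bool) : ℕ :=
  (Finset.Icc 1 N).sup (sccSize N f)

/-- The probability of the orientation `f` when each edge is independently
reversed with probability `ρ`. -/
def orientProb (N : ℕ) (ρ : ℝ) (f : {e // e ∈ divEdges N} → Bool) : ℝ :=
  ∏ e : {e // e ∈ divEdges N}, if f e then ρ else 1 - ρ

/-- `E[#Φ(𝒟_ρ(N))]`: the expected size of the largest strongly connected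
component of the randomly oriented divisor graph. -/
def expLargestSCC (N : ℕ) (ρ : ℝ) : ℝ :=
  ∑ f : {e // e ∈ divEdges N} → Bool, orientProb N ρ f * (largestSCC N f : ℝ)


noncomputable section Aux

def wt (ρ : ℝ) (b : Bool) : ℝ := if b then ρ else 1 - ρ

lemma sum_prod_general {β V : Type*} [Fintype β] [DecidableEq β] [Fintype V] [DecidableEq V]
    (G : β → V → ℝ) :
    ∑ g : β → V, ∏ b, G b (g b) = ∏ b, ∑ v : V, G b v :=
  (Fintype.prod_sum G).symm

lemma sum_wt_one (ρ : ℝ) {β : Type*} [Fintype β] [DecidableEq β] :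
    ∑ g : β → Bool, ∏ b, wt ρ (g b) = 1 := by
  rw [sum_prod_general]
  have h1 : ∑ v : Bool, wt ρ v = 1 := by simp [wt]
  rw [Finset.prod_congr rfl fun b _ => h1, Finset.prod_const_one]

def pairEquiv (β : Type*) : (β × Bool → Bool) ≃ (β → Bool × Bool) where
  toFun g b := (g (b, false), g (b, true))
  invFun h p := if p.2 then (h p.1).2 else (h p.1).1
  left_inv g := by funext p; rcases p with ⟨b, _ | _⟩ <;> simp
  right_inv h := by funext b; simp

lemma orientProb_eq (N : ℕ) (ρ : ℝ) (f : {e // e ∈ divEdges N} → Bool) :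
    orientProb N ρ f = ∏ e, wt ρ (f e) := rfl

lemma marginal {N : ℕ} (ρ : ℝ) {α : Type} [Fintype α] [DecidableEq α]
    (ι : α → {e // e ∈ divEdges N}) (hι : Function.Injective ι)
    (F : (α → Bool) → ℝ) :
    ∑ f : {e // e ∈ divEdges N} → Bool, orientProb N ρ f * F (fun a => f (ι a))
      = ∑ g : α → Bool, (∏ a, wt ρ (g a)) * F g := by
  classical
  let p : {e // e ∈ divEdges N} → Prop := fun e => e ∈ Set.range ι
  let γ := {e : {e // e ∈ divEdges N} // ¬ p e}
  let σ : α ⊕ γ ≃ {e // e ∈ divEdges N} :=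
    ((Equiv.ofInjective ι hι).sumCongr (Equiv.refl γ)).trans (Equiv.sumCompl p)
  have hσ : ∀ a : α, σ (Sum.inl a) = ι a := by
    intro a; rfl
  have step1 : (∑ f : {e // e ∈ divEdges N} → Bool, orientProb N ρ f * F (fun a => f (ι a)))
      = ∑ u : α ⊕ γ → Bool, (∏ i, wt ρ (u i)) * F (fun a => u (Sum.inl a)) := by
    apply Fintype.sum_equiv (Equiv.arrowCongr σ (Equiv.refl Bool)).symm
    intro f
    simp only [Equiv.arrowCongr_symm, Equiv.arrowCongr_apply, Equiv.refl_symm, Equiv.coe_refl,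
      Function.comp_def, id_eq]
    rw [orientProb_eq, ← Equiv.prod_comp σ (fun e => wt ρ (f e))]
    simp only [Equiv.symm_symm]
    have he : (fun a => f (ι a)) = fun a => f (σ (Sum.inl a)) := funext fun a => by rw [hσ]
    rw [he]
  rw [step1]
  have step2 : (∑ u : α ⊕ γ → Bool, (∏ i, wt ρ (u i)) * F (fun a => u (Sum.inl a)))
      = ∑ q : (α → Bool) × (γ → Bool),
          ((∏ a, wt ρ (q.1 a)) * (∏ c, wt ρ (q.2 c))) * F q.1 := by
    apply Fintype.sum_equiv (Equiv.sumArrowEquivProdArrow α γ Bool)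
    intro u
    rw [Fintype.prod_sum_type]
    rfl
  rw [step2, Fintype.sum_prod_type]
  have : ∀ g : α → Bool,
      (∑ h : γ → Bool, ((∏ a, wt ρ (g a)) * (∏ c, wt ρ (h c))) * F g)
        = (∏ a, wt ρ (g a)) * F g := by
    intro g
    have : (∑ h : γ → Bool, ((∏ a, wt ρ (g a)) * (∏ c, wt ρ (h c))) * F g)
        = ((∏ a, wt ρ (g a)) * F g) * ∑ h : γ → Bool, ∏ c, wt ρ (h c) := by
      rw [Finset.mul_sum]; apply Finset.sum_congr rfl; intro h _; ring
    rw [this, sum_wt_one, mul_one]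
  exact Finset.sum_congr rfl fun g _ => this g

lemma cyl {β : Type} [Fintype β] [DecidableEq β] (ρ : ℝ) (c : Bool) (P : Bool → Bool → Bool) :
    (∑ g : Option (β × Bool) → Bool,
        (∏ a, wt ρ (g a)) *
          ((if g none = c then (1:ℝ) else 0) *
            ∏ d : β, (if P (g (some (d, false))) (g (some (d, true))) = true then (1:ℝ) else 0)))
      = wt ρ c *
          (∑ p : Bool × Bool, if P p.1 p.2 = true then wt ρ p.1 * wt ρ p.2 else 0) ^ Fintype.card β := by
  classical
  have step0 : ∀ g : Option (β × Bool) → Bool,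
      (∏ a, wt ρ (g a)) *
          ((if g none = c then (1:ℝ) else 0) *
            ∏ d : β, (if P (g (some (d, false))) (g (some (d, true))) = true then (1:ℝ) else 0))
      = (wt ρ (g none) * (if g none = c then (1:ℝ) else 0)) *
          ∏ d : β, (wt ρ (g (some (d, false))) * wt ρ (g (some (d, true))) *
            (if P (g (some (d, false))) (g (some (d, true))) = true then (1:ℝ) else 0)) := by
    intro g
    rw [Fintype.prod_option (fun a => wt ρ (g a)), Fintype.prod_prod_type]
    simp only [Fintype.prod_bool]
    have h1 : (∏ d : β, (wt ρ (g (some (d, false))) * wt ρ (g (some (d, true))) *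
            (if P (g (some (d, false))) (g (some (d, true))) = true then (1:ℝ) else 0)))
        = (∏ d : β, wt ρ (g (some (d, true))) * wt ρ (g (some (d, false)))) *
          ∏ d : β, (if P (g (some (d, false))) (g (some (d, true))) = true then (1:ℝ) else 0) := by
      rw [← Finset.prod_mul_distrib]
      exact Finset.prod_congr rfl fun d _ => by ring
    rw [h1]
    ring
  rw [Finset.sum_congr rfl fun g _ => step0 g]
  have step1 : (∑ g : Option (β × Bool) → Bool,
      (wt ρ (g none) * (if g none = c then (1:ℝ) else 0)) *
          ∏ d : β, (wt ρ (g (some (d, false))) * wt ρ (g (some (d, true))) *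
            (if P (g (some (d, false))) (g (some (d, true))) = true then (1:ℝ) else 0)))
      = ∑ q : Bool × (β × Bool → Bool),
          (wt ρ q.1 * (if q.1 = c then (1:ℝ) else 0)) *
            ∏ d : β, (wt ρ (q.2 (d, false)) * wt ρ (q.2 (d, true)) *
              (if P (q.2 (d, false)) (q.2 (d, true)) = true then (1:ℝ) else 0)) := by
    apply Fintype.sum_equiv (Equiv.piOptionEquivProd (β := fun _ => Bool))
    intro g
    rfl
  rw [step1, Fintype.sum_prod_type]
  have step2 : (∑ h : β × Bool → Bool,
        ∏ d : β, (wt ρ (h (d, false)) * wt ρ (h (d, true)) *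
          (if P (h (d, false)) (h (d, true)) = true then (1:ℝ) else 0)))
      = (∑ p : Bool × Bool, if P p.1 p.2 = true then wt ρ p.1 * wt ρ p.2 else 0) ^ Fintype.card β := by
    have e1 : (∑ h : β × Bool → Bool,
        ∏ d : β, (wt ρ (h (d, false)) * wt ρ (h (d, true)) *
          (if P (h (d, false)) (h (d, true)) = true then (1:ℝ) else 0)))
        = ∑ k : β → Bool × Bool,
            ∏ d : β, (wt ρ (k d).1 * wt ρ (k d).2 *
              (if P (k d).1 (k d).2 = true then (1:ℝ) else 0)) := by
      apply Fintype.sum_equiv (pairEquiv β)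
      intro h
      rfl
    rw [e1, sum_prod_general (fun (d : β) (p : Bool × Bool) => wt ρ p.1 * wt ρ p.2 * (if P p.1 p.2 = true then (1:ℝ) else 0))]
    rw [Finset.prod_congr rfl (fun d _ => ?_), Finset.prod_const, Finset.card_univ]
    apply Finset.sum_congr rfl
    intro p _
    by_cases hp : P p.1 p.2 = true <;> simp [hp]
  have step3 : (∑ b : Bool, wt ρ b * (if b = c then (1:ℝ) else 0)) = wt ρ c := by
    cases c <;> simp [wt]
  calc (∑ b : Bool, ∑ h : β × Bool → Bool,
        (wt ρ b * (if b = c then (1:ℝ) else 0)) *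
          ∏ d : β, (wt ρ (h (d, false)) * wt ρ (h (d, true)) *
            (if P (h (d, false)) (h (d, true)) = true then (1:ℝ) else 0)))
      = (∑ b : Bool, wt ρ b * (if b = c then (1:ℝ) else 0)) *
        (∑ h : β × Bool → Bool,
          ∏ d : β, (wt ρ (h (d, false)) * wt ρ (h (d, true)) *
            (if P (h (d, false)) (h (d, true)) = true then (1:ℝ) else 0))) := by
        rw [Finset.sum_mul_sum]
    _ = _ := by rw [step2, step3]

lemma orientProb_nonneg {N : ℕ} {ρ : ℝ} (hρ : ρ ∈ Set.Icc (0:ℝ) 1)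
    (f : {e // e ∈ divEdges N} → Bool) : 0 ≤ orientProb N ρ f := by
  apply Finset.prod_nonneg
  intro e _
  rcases hρ with ⟨h0, h1⟩
  by_cases hb : f e <;> simp [hb] <;> linarith

lemma sum_orientProb {N : ℕ} (ρ : ℝ) :
    ∑ f : {e // e ∈ divEdges N} → Bool, orientProb N ρ f = 1 := by
  rw [Finset.sum_congr rfl fun f _ => orientProb_eq N ρ f]
  exact sum_wt_one ρ

lemma key {N : ℕ} {x : ℕ} (ρ : ℝ) (hρ : ρ ∈ Set.Icc (0:ℝ) 1) {n : ℕ} (hn1 : 1 ≤ n)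
    (hnN : n ≤ N) (hx : x + 2 ≤ n.divisors.card) :
    1 - ρ * (2 * ρ - ρ ^ 2) ^ x - (1 - ρ) * (1 - ρ ^ 2) ^ x ≤
      ∑ f : {e // e ∈ divEdges N} → Bool, orientProb N ρ f *
        (if (Relation.ReflTransGen (dAdj N f) 1 n ∧ Relation.ReflTransGen (dAdj N f) n 1)
          then (1:ℝ) else 0) := by
  classical
  have hn0 : n ≠ 0 := by omega
  have hn2 : 2 ≤ n := by
    by_contra hc
    have hn1' : n = 1 := by omega
    subst hn1'
    simp [Nat.divisors_one] at hx
  -- pick x nontrivial divisors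
  have hle : x ≤ (n.divisors \ {1, n}).card := by
    have h2 : ({1, n} : Finset ℕ).card ≤ 2 := Finset.card_insert_le _ _ |>.trans (by simp)
    have := Finset.le_card_sdiff ({1, n} : Finset ℕ) n.divisors
    omega
  obtain ⟨D, hDsub, hDcard⟩ := Finset.exists_subset_card_eq hle
  have hDfact : ∀ d ∈ D, 2 ≤ d ∧ d < n ∧ d ∣ n := by
    intro d hd
    have hd' := hDsub hd
    rw [Finset.mem_sdiff] at hd'
    obtain ⟨hdiv, hnotin⟩ := hd'
    rw [Nat.mem_divisors] at hdiv
    have hdvd := hdiv.1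
    have hd1 : d ≠ 1 := by intro h; exact hnotin (by simp [h])
    have hdn : d ≠ n := by intro h; exact hnotin (by simp [h])
    have hdpos : 1 ≤ d := Nat.pos_of_dvd_of_pos hdvd (by omega)
    have hdle : d ≤ n := Nat.le_of_dvd (by omega) hdvd
    exact ⟨by omega, by omega, hdvd⟩
  have memE : ∀ a b : ℕ, 1 ≤ a → b ≤ N → a < b → a ∣ b → (a, b) ∈ divEdges N := by
    intro a b ha hb hab hd
    simp only [divEdges, Finset.mem_filter, Finset.mem_product, Finset.mem_Icc]
    exact ⟨⟨⟨ha, by omega⟩, by omega, hb⟩, hab, hd⟩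
  have h1n : ((1:ℕ), n) ∈ divEdges N := memE 1 n le_rfl hnN (by omega) (one_dvd n)
  have h1d : ∀ d : {d // d ∈ D}, ((1:ℕ), (d:ℕ)) ∈ divEdges N := by
    intro d
    obtain ⟨h2d, hdn, hdvd⟩ := hDfact d d.2
    exact memE 1 d le_rfl (by omega) (by omega) (one_dvd _)
  have hdn : ∀ d : {d // d ∈ D}, ((d:ℕ), n) ∈ divEdges N := by
    intro d
    obtain ⟨h2d, hdn, hdvd⟩ := hDfact d d.2
    exact memE d n (by omega) hnN hdn hdvd
  set ι : Option ({d // d ∈ D} × Bool) → {e // e ∈ divEdges N} := fun a =>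
    match a with
    | none => ⟨(1, n), h1n⟩
    | some (d, false) => ⟨(1, (d : ℕ)), h1d d⟩
    | some (d, true) => ⟨((d : ℕ), n), hdn d⟩ with hιdef
  have hι : Function.Injective ι := by
    intro a b hab
    have hne1 : ∀ d : {d // d ∈ D}, ¬((d:ℕ) = 1) := by
      intro d hd; obtain ⟨u, v, _⟩ := hDfact d d.2; omega
    have hne1' : ∀ d : {d // d ∈ D}, ¬((1:ℕ) = (d:ℕ)) := by
      intro d hd; obtain ⟨u, v, _⟩ := hDfact d d.2; omega
    have hnen : ∀ d : {d // d ∈ D}, ¬((d:ℕ) = n) := by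
      intro d hd; obtain ⟨u, v, _⟩ := hDfact d d.2; omega
    have hnen' : ∀ d : {d // d ∈ D}, ¬(n = (d:ℕ)) := by
      intro d hd; obtain ⟨u, v, _⟩ := hDfact d d.2; omega
    rcases a with _ | ⟨da, _ | _⟩ <;> rcases b with _ | ⟨db, _ | _⟩ <;>
      simp only [ι, Subtype.mk.injEq, Prod.mk.injEq, Option.some.injEq, true_and,
        and_true] at hab ⊢
    all_goals first
      | rfl
      | exact Subtype.ext hab
      | exact absurd hab (hnen _)
      | exact absurd hab (hnen' _)
      | exact absurd hab (hne1 _)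
      | exact absurd hab (hne1' _)
      | exact absurd hab.1 (hne1 _)
      | exact absurd hab.1 (hne1' _)

  set FA : (Option ({d // d ∈ D} × Bool) → Bool) → ℝ := fun g =>
    (if g none = true then (1:ℝ) else 0) *
      ∏ d : {d // d ∈ D},
        (if (g (some (d, false)) || g (some (d, true))) = true then (1:ℝ) else 0) with hFAdef
  set FB : (Option ({d // d ∈ D} × Bool) → Bool) → ℝ := fun g =>
    (if g none = false then (1:ℝ) else 0) *
      ∏ d : {d // d ∈ D},
        (if (!g (some (d, false)) || !g (some (d, true))) = true then (1:ℝ) else 0) with hFBdef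
  have hFA01 : ∀ g, 0 ≤ FA g ∧ FA g ≤ 1 := by
    intro g
    constructor
    · apply mul_nonneg (by positivity)
      apply Finset.prod_nonneg; intro d _; positivity
    · apply mul_le_one₀ (by split <;> norm_num) (Finset.prod_nonneg fun d _ => by positivity)
      apply Finset.prod_le_one (fun d _ => by positivity) (fun d _ => by split <;> norm_num)
  have hFB01 : ∀ g, 0 ≤ FB g ∧ FB g ≤ 1 := by
    intro g
    constructor
    · apply mul_nonneg (by positivity)
      apply Finset.prod_nonneg; intro d _; positivity
    · apply mul_le_one₀ (by split <;> norm_num) (Finset.prod_nonneg fun d _ => by positivity)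
      apply Finset.prod_le_one (fun d _ => by positivity) (fun d _ => by split <;> norm_num)
  -- pointwise bound
  have pointwise : ∀ f : {e // e ∈ divEdges N} → Bool,
      1 - FA (fun a => f (ι a)) - FB (fun a => f (ι a)) ≤
        (if (Relation.ReflTransGen (dAdj N f) 1 n ∧ Relation.ReflTransGen (dAdj N f) n 1)
          then (1:ℝ) else 0) := by
    intro f
    set g : Option ({d // d ∈ D} × Bool) → Bool := fun a => f (ι a) with hgdef
    by_cases hA : g none = true ∧ ∀ d : {d // d ∈ D},
        g (some (d, false)) = true ∨ g (some (d, true)) = true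
    · have : FA g = 1 := by
        simp only [FA, hA.1, if_true, one_mul]
        apply Finset.prod_eq_one
        intro d _
        rcases hA.2 d with h | h <;> simp [h]
      rw [this]
      have := (hFB01 g).1
      have hge : (0:ℝ) ≤ (if (Relation.ReflTransGen (dAdj N f) 1 n ∧
          Relation.ReflTransGen (dAdj N f) n 1) then (1:ℝ) else 0) := by positivity
      linarith
    by_cases hB : g none = false ∧ ∀ d : {d // d ∈ D},
        g (some (d, false)) = false ∨ g (some (d, true)) = false
    · have : FB g = 1 := by
        simp only [FB, hB.1, if_true, one_mul]
        apply Finset.prod_eq_one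
        intro d _
        rcases hB.2 d with h | h <;> simp [h]
      rw [this]
      have := (hFA01 g).1
      have hge : (0:ℝ) ≤ (if (Relation.ReflTransGen (dAdj N f) 1 n ∧
          Relation.ReflTransGen (dAdj N f) n 1) then (1:ℝ) else 0) := by positivity
      linarith
    -- neither: strongly connected
    have hSC : Relation.ReflTransGen (dAdj N f) 1 n ∧ Relation.ReflTransGen (dAdj N f) n 1 := by
      have hg0 : g none = f ⟨(1, n), h1n⟩ := rfl
      have hgf : ∀ d : {d // d ∈ D}, g (some (d, false)) = f ⟨(1, (d:ℕ)), h1d d⟩ := fun d => rfl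
      have hgt : ∀ d : {d // d ∈ D}, g (some (d, true)) = f ⟨((d:ℕ), n), hdn d⟩ := fun d => rfl
      by_cases hgn : g none = true
      · push_neg at hA
        obtain ⟨d, hdf, hdt⟩ := hA hgn
        replace hdf : g (some (d, false)) = false := by simpa using hdf
        replace hdt : g (some (d, true)) = false := by simpa using hdt
        constructor
        · exact Relation.ReflTransGen.single (Or.inr ⟨h1n, by rw [← hg0]; exact hgn⟩)
        · apply Relation.ReflTransGen.head (b := (d:ℕ))
          · exact Or.inl ⟨hdn d, by rw [← hgt d]; exact hdt⟩
          · exact Relation.ReflTransGen.single (Or.inl ⟨h1d d, by rw [← hgf d]; exact hdf⟩)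
      · rw [Bool.not_eq_true] at hgn
        push_neg at hB
        obtain ⟨d, hdf, hdt⟩ := hB hgn
        replace hdf : g (some (d, false)) = true := by simpa using hdf
        replace hdt : g (some (d, true)) = true := by simpa using hdt
        constructor
        · apply Relation.ReflTransGen.head (b := (d:ℕ))
          · exact Or.inr ⟨h1d d, by rw [← hgf d]; exact hdf⟩
          · exact Relation.ReflTransGen.single (Or.inr ⟨hdn d, by rw [← hgt d]; exact hdt⟩)
        · exact Relation.ReflTransGen.single (Or.inl ⟨h1n, by rw [← hg0]; exact hgn⟩)
    rw [if_pos hSC]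
    have := (hFA01 g).1
    have := (hFB01 g).1
    linarith
  -- sum bound
  have hPnn : ∀ f : {e // e ∈ divEdges N} → Bool, 0 ≤ orientProb N ρ f :=
    orientProb_nonneg hρ
  have hsum : ∑ f : {e // e ∈ divEdges N} → Bool,
      orientProb N ρ f * (1 - FA (fun a => f (ι a)) - FB (fun a => f (ι a))) ≤
      ∑ f : {e // e ∈ divEdges N} → Bool, orientProb N ρ f *
        (if (Relation.ReflTransGen (dAdj N f) 1 n ∧ Relation.ReflTransGen (dAdj N f) n 1)
          then (1:ℝ) else 0) := by
    apply Finset.sum_le_sum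
    intro f _
    exact mul_le_mul_of_nonneg_left (pointwise f) (hPnn f)
  refine le_trans ?_ hsum
  have expand : ∑ f : {e // e ∈ divEdges N} → Bool,
      orientProb N ρ f * (1 - FA (fun a => f (ι a)) - FB (fun a => f (ι a)))
      = (∑ f : {e // e ∈ divEdges N} → Bool, orientProb N ρ f)
        - (∑ f : {e // e ∈ divEdges N} → Bool, orientProb N ρ f * FA (fun a => f (ι a)))
        - (∑ f : {e // e ∈ divEdges N} → Bool, orientProb N ρ f * FB (fun a => f (ι a))) := by
    rw [← Finset.sum_sub_distrib, ← Finset.sum_sub_distrib]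
    apply Finset.sum_congr rfl
    intro f _
    ring
  rw [expand, sum_orientProb]
  have hcard : Fintype.card {d // d ∈ D} = x := by
    rw [Fintype.card_coe, hDcard]
  have hA_val : (∑ f : {e // e ∈ divEdges N} → Bool,
      orientProb N ρ f * FA (fun a => f (ι a))) = ρ * (2 * ρ - ρ ^ 2) ^ x := by
    rw [marginal ρ ι hι FA]
    simp only [hFAdef]
    have hc := cyl (β := {d // d ∈ D}) ρ true (fun u v => u || v)
    rw [hc]
    have hsump : (∑ p : Bool × Bool,
        if (p.1 || p.2) = true then wt ρ p.1 * wt ρ p.2 else 0) = 2 * ρ - ρ ^ 2 := by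
      rw [Fintype.sum_prod_type]
      simp [wt]
      ring
    rw [hsump, hcard]
    simp [wt]
  have hB_val : (∑ f : {e // e ∈ divEdges N} → Bool,
      orientProb N ρ f * FB (fun a => f (ι a))) = (1 - ρ) * (1 - ρ ^ 2) ^ x := by
    rw [marginal ρ ι hι FB]
    simp only [hFBdef]
    have hc := cyl (β := {d // d ∈ D}) ρ false (fun u v => !u || !v)
    rw [hc]
    have hsump : (∑ p : Bool × Bool,
        if (!p.1 || !p.2) = true then wt ρ p.1 * wt ρ p.2 else 0) = 1 - ρ ^ 2 := by
      rw [Fintype.sum_prod_type]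
      simp [wt]
      ring
    rw [hsump, hcard]
    simp [wt]
  rw [hA_val, hB_val]

end Aux

/-- If at least `y` positive integers `n ≤ N` satisfy `τ(n) − 2 ≥ x`, then
`E[#Φ(𝒟_ρ(N))] ≥ y(1 − ρ(2ρ − ρ²)^x − (1−ρ)(1−ρ²)^x)`. -/
theorem stmt16 (N : ℕ) (x : ℕ) (y : ℝ) (hy : 0 ≤ y) (ρ : ℝ) (hρ : ρ ∈ Set.Icc (0 : ℝ) 1)
    (h : y ≤ (((Finset.Icc 1 N).filter (fun n => x + 2 ≤ n.divisors.card)).card : ℝ)) :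
    y * (1 - ρ * (2 * ρ - ρ ^ 2) ^ x - (1 - ρ) * (1 - ρ ^ 2) ^ x) ≤ expLargestSCC N ρ := by
  classical
  set S := (Finset.Icc 1 N).filter (fun n => x + 2 ≤ n.divisors.card) with hS
  have hPnn : ∀ f : {e // e ∈ divEdges N} → Bool, 0 ≤ orientProb N ρ f :=
    orientProb_nonneg hρ
  have hE0 : 0 ≤ expLargestSCC N ρ :=
    Finset.sum_nonneg fun f _ => mul_nonneg (hPnn f) (Nat.cast_nonneg _)
  set q : ℝ := 1 - ρ * (2 * ρ - ρ ^ 2) ^ x - (1 - ρ) * (1 - ρ ^ 2) ^ x with hq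
  rcases le_or_gt q 0 with hq0 | hq0
  · have : y * q ≤ 0 := mul_nonpos_iff.2 (Or.inl ⟨hy, hq0⟩)
    linarith
  rcases S.eq_empty_or_nonempty with hSe | hSne
  · have hy0 : y ≤ 0 := by
      rw [hSe] at h; simpa using h
    have : y * q ≤ 0 := mul_nonpos_iff.2 (Or.inr ⟨hy0, le_of_lt hq0⟩)
    linarith
  obtain ⟨n₀, hn₀⟩ := hSne
  have hN1 : 1 ≤ N := by
    have h1 := (Finset.mem_filter.1 hn₀).1
    rw [Finset.mem_Icc] at h1
    omega
  have step1 : ∀ n ∈ S, q ≤ ∑ f : {e // e ∈ divEdges N} → Bool, orientProb N ρ f *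
      (if (Relation.ReflTransGen (dAdj N f) 1 n ∧ Relation.ReflTransGen (dAdj N f) n 1)
        then (1:ℝ) else 0) := by
    intro n hn
    rw [hS, Finset.mem_filter, Finset.mem_Icc] at hn
    exact key ρ hρ hn.1.1 hn.1.2 hn.2
  have step2 : (S.card : ℝ) * q ≤ ∑ f : {e // e ∈ divEdges N} → Bool,
      orientProb N ρ f * (sccSize N f 1 : ℝ) := by
    have hcq : (S.card : ℝ) * q = ∑ _n ∈ S, q := by
      rw [Finset.sum_const, nsmul_eq_mul]
    rw [hcq]
    calc ∑ _n ∈ S, q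
        ≤ ∑ n ∈ S, ∑ f : {e // e ∈ divEdges N} → Bool, orientProb N ρ f *
            (if (Relation.ReflTransGen (dAdj N f) 1 n ∧ Relation.ReflTransGen (dAdj N f) n 1)
              then (1:ℝ) else 0) := Finset.sum_le_sum step1
      _ = ∑ f : {e // e ∈ divEdges N} → Bool, ∑ n ∈ S, orientProb N ρ f *
            (if (Relation.ReflTransGen (dAdj N f) 1 n ∧ Relation.ReflTransGen (dAdj N f) n 1)
              then (1:ℝ) else 0) := Finset.sum_comm
      _ ≤ ∑ f : {e // e ∈ divEdges N} → Bool, orientProb N ρ f * (sccSize N f 1 : ℝ) := by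
          apply Finset.sum_le_sum
          intro f _
          rw [← Finset.mul_sum]
          apply mul_le_mul_of_nonneg_left _ (hPnn f)
          rw [Finset.sum_boole]
          have hsub : S.filter (fun n => Relation.ReflTransGen (dAdj N f) 1 n ∧
              Relation.ReflTransGen (dAdj N f) n 1) ⊆
              (Finset.Icc 1 N).filter (fun w => Relation.ReflTransGen (dAdj N f) 1 w ∧
                Relation.ReflTransGen (dAdj N f) w 1) := by
            intro m hm
            rw [Finset.mem_filter] at hm ⊢
            exact ⟨(Finset.mem_filter.1 (hS ▸ hm.1)).1, hm.2⟩
          have := Finset.card_le_card hsub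
          rw [sccSize]
          exact_mod_cast this
  have step3 : (∑ f : {e // e ∈ divEdges N} → Bool,
      orientProb N ρ f * (sccSize N f 1 : ℝ)) ≤ expLargestSCC N ρ := by
    apply Finset.sum_le_sum
    intro f _
    apply mul_le_mul_of_nonneg_left _ (hPnn f)
    have h1 : (1:ℕ) ∈ Finset.Icc 1 N := by rw [Finset.mem_Icc]; omega
    exact_mod_cast Nat.cast_le.2 (Finset.le_sup (f := sccSize N f) h1)
  have hyq : y * q ≤ (S.card : ℝ) * q := mul_le_mul_of_nonneg_right h (le_of_lt hq0)
  linarith
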